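/- Let A = √(8/3). Suppose ρ₁, u₁⁽¹⁾, θ₁, ρ₂, u₁⁽²⁾, θ₂, ρ₃, u₁⁽³⁾, θ₃, h₁¹ are smooth real-valued functions of (t,x) ∈ ℝ×ℝ satisfying at every point: u₁⁽¹⁾ = Aρ₁, θ₁ = (2/3)ρ₁; u₁⁽²⁾ = Aρ₂ + h₁¹; θ₂ = (2/3)ρ₂ − (1/9)ρ₁²; the equation ∂ₜρ₂ − A∂ₓρ₃ + ∂ₓu₁⁽³⁾ + ∂ₓ(ρ₁u₁⁽²⁾) + ∂ₓ(ρ₂u₁⁽¹⁾) = 0; and the equation ∂ₜθ₂ − A∂ₓθ₃ + (2/3)∂ₓu₁⁽³⁾ + (2/3)θ₁∂ₓu₁⁽²⁾ + (2/3)θ₂∂ₓu₁⁽¹⁾ + u₁⁽¹⁾∂ₓθ₂ + u₁⁽²⁾∂ₓθ₁ = 0. Then at every point (2/3)∂ₓρ₃ − ∂ₓθ₃ − (2/9)∂ₓ(ρ₁ρ₂) = −(1/A)h₃¹, where h₃¹ := −(2/3)∂ₓ(ρ₁h₁¹) − (1/9)∂ₜ(ρ₁²) + (4/9)ρ₁∂ₓh₁¹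 − (2/27)Aρ₁²∂ₓρ₁ − (1/9)Aρ₁∂ₓ(ρ₁²) + (2/3)h₁¹∂ₓρ₁. -/

import Mathlib

/-- Partial derivative in `t` of a function of `(t, x) : ℝ × ℝ`. -/
noncomputable def pdt (f : ℝ × ℝ → ℝ) (p : ℝ × ℝ) : ℝ :=
  deriv (fun s => f (s, p.2)) p.1

/-- Partial derivative in `x` of a function of `(t, x) : ℝ × ℝ`. -/
noncomputable def pdx (f : ℝ × ℝ → ℝ) (p : ℝ × ℝ) : ℝ :=
  deriv (fun y => f (p.1, y)) p.2

/-!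
Subtract `2/3` times the mass equation from the temperature equation: the `∂ₓu₁⁽³⁾` terms cancel,
the closure relations turn `∂ₜθ₂ - (2/3)∂ₜρ₂` into `-(1/9)∂ₜ(ρ₁²)`, and by the product rule the
`ρ₁ρ₂` terms collect into `-(2/9)A∂ₓ(ρ₁ρ₂)`. What remains is `A` times the claimed identity,
and `A ≠ 0`.
-/

section PartialDerivatives

variable {f g : ℝ × ℝ → ℝ} {p : ℝ × ℝ}

theorem DifferentiableAt.hasDerivAt_pdt (hf : DifferentiableAt ℝ f p) :
    HasDerivAt (fun s => f (s, p.2)) (pdt f p) p.1 :=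
  (hf.comp p.1 (differentiableAt_id.prodMk (differentiableAt_const p.2))).hasDerivAt

theorem DifferentiableAt.hasDerivAt_pdx (hf : DifferentiableAt ℝ f p) :
    HasDerivAt (fun y => f (p.1, y)) (pdx f p) p.2 :=
  (hf.comp p.2 ((differentiableAt_const p.1).prodMk differentiableAt_id)).hasDerivAt

theorem pdt_sub (hf : DifferentiableAt ℝ f p) (hg : DifferentiableAt ℝ g p) :
    pdt (fun q => f q - g q) p = pdt f p - pdt g p :=
  (hf.hasDerivAt_pdt.sub hg.hasDerivAt_pdt).deriv

theorem pdt_const_mul (c : ℝ) : pdt (fun q => c * f q) p = c * pdt f p :=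
  deriv_const_mul_field c

theorem pdx_add (hf : DifferentiableAt ℝ f p) (hg : DifferentiableAt ℝ g p) :
    pdx (fun q => f q + g q) p = pdx f p + pdx g p :=
  (hf.hasDerivAt_pdx.add hg.hasDerivAt_pdx).deriv

theorem pdx_sub (hf : DifferentiableAt ℝ f p) (hg : DifferentiableAt ℝ g p) :
    pdx (fun q => f q - g q) p = pdx f p - pdx g p :=
  (hf.hasDerivAt_pdx.sub hg.hasDerivAt_pdx).deriv

theorem pdx_mul (hf : DifferentiableAt ℝ f p) (hg : DifferentiableAt ℝ g p) :
    pdx (fun q => f q * g q) p = pdx f p * g p + f p * pdx g p :=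
  (hf.hasDerivAt_pdx.mul hg.hasDerivAt_pdx).deriv

theorem pdx_const (c : ℝ) : pdx (fun _ => c) p = 0 :=
  deriv_const p.2 c

end PartialDerivatives

theorem third_order_temperature_combination_general
    (A : ℝ) (hA : A = Real.sqrt (8 / 3))
    (ρ₁ u₁ θ₁ ρ₂ u₂ θ₂ ρ₃ u₃ θ₃ h₁ : ℝ × ℝ → ℝ)
    (hρ₁ : ContDiff ℝ (⊤ : ℕ∞) ρ₁)
    (hρ₂ : ContDiff ℝ (⊤ : ℕ∞) ρ₂)
    (hh₁ : ContDiff ℝ (⊤ : ℕ∞) h₁)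
    (rel_u₁ : ∀ p, u₁ p = A * ρ₁ p)
    (rel_θ₁ : ∀ p, θ₁ p = (2 / 3) * ρ₁ p)
    (rel_u₂ : ∀ p, u₂ p = A * ρ₂ p + h₁ p)
    (rel_θ₂ : ∀ p, θ₂ p = (2 / 3) * ρ₂ p - (1 / 9) * (ρ₁ p) ^ 2)
    (eqa : ∀ p, pdt ρ₂ p - A * pdx ρ₃ p + pdx u₃ p
      + pdx (fun q => ρ₁ q * u₂ q) p + pdx (fun q => ρ₂ q * u₁ q) p = 0)
    (eqc : ∀ p, pdt θ₂ p - A * pdx θ₃ p + (2 / 3) * pdx u₃ p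
      + (2 / 3) * θ₁ p * pdx u₂ p + (2 / 3) * θ₂ p * pdx u₁ p
      + u₁ p * pdx θ₂ p + u₂ p * pdx θ₁ p = 0) :
    ∀ p, (2 / 3) * pdx ρ₃ p - pdx θ₃ p - (2 / 9) * pdx (fun q => ρ₁ q * ρ₂ q) p
      = -(1 / A) * (-((2 / 3) * pdx (fun q => ρ₁ q * h₁ q) p)
          - (1 / 9) * pdt (fun q => (ρ₁ q) ^ 2) p + (4 / 9) * ρ₁ p * pdx h₁ p
          - (2 / 27) * A * (ρ₁ p) ^ 2 * pdx ρ₁ p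
          - (1 / 9) * A * ρ₁ p * pdx (fun q => (ρ₁ q) ^ 2) p
          + (2 / 3) * h₁ p * pdx ρ₁ p) := by
  intro p
  have hA₀ : A ≠ 0 := by rw [hA]; positivity
  have dρ₁ : Differentiable ℝ ρ₁ := hρ₁.differentiable (by simp)
  have dρ₂ : Differentiable ℝ ρ₂ := hρ₂.differentiable (by simp)
  have dh₁ : Differentiable ℝ h₁ := hh₁.differentiable (by simp)
  obtain rfl : u₁ = fun q => A * ρ₁ q := funext rel_u₁
  obtain rfl : θ₁ = fun q => (2 / 3) * ρ₁ q := funext rel_θ₁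
  obtain rfl : u₂ = fun q => A * ρ₂ q + h₁ q := funext rel_u₂
  obtain rfl : θ₂ = fun q => (2 / 3) * ρ₂ q - (1 / 9) * (ρ₁ q) ^ 2 := funext rel_θ₂
  have mass := eqa p
  have temperature := eqc p
  simp (disch := fun_prop) only [pdt_sub, pdt_const_mul, pdx_add, pdx_sub, pdx_mul,
    pdx_const] at mass temperature ⊢
  refine mul_left_cancel₀ hA₀ ?_
  rw [← mul_assoc, mul_neg, mul_one_div_cancel hA₀]
  linear_combination temperature - (2 / 3) * mass

/-- the identity
`(2/3)∂ₓρ₃ − ∂ₓθ₃ − (2/9)∂ₓ(ρ₁ρ₂) = −(1/A)h₃¹` obtained from the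
third-order mass and temperature equations. -/
theorem third_order_temperature_combination
    (A : ℝ) (hA : A = Real.sqrt (8 / 3))
    (ρ₁ u₁ θ₁ ρ₂ u₂ θ₂ ρ₃ u₃ θ₃ h₁ : ℝ × ℝ → ℝ)
    (hρ₁ : ContDiff ℝ (⊤ : ℕ∞) ρ₁) (hu₁ : ContDiff ℝ (⊤ : ℕ∞) u₁)
    (hθ₁ : ContDiff ℝ (⊤ : ℕ∞) θ₁)
    (hρ₂ : ContDiff ℝ (⊤ : ℕ∞) ρ₂) (hu₂ : ContDiff ℝ (⊤ : ℕ∞) u₂)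
    (hθ₂ : ContDiff ℝ (⊤ : ℕ∞) θ₂)
    (hρ₃ : ContDiff ℝ (⊤ : ℕ∞) ρ₃) (hu₃ : ContDiff ℝ (⊤ : ℕ∞) u₃)
    (hθ₃ : ContDiff ℝ (⊤ : ℕ∞) θ₃)
    (hh₁ : ContDiff ℝ (⊤ : ℕ∞) h₁)
    (rel_u₁ : ∀ p, u₁ p = A * ρ₁ p)
    (rel_θ₁ : ∀ p, θ₁ p = (2 / 3) * ρ₁ p)
    (rel_u₂ : ∀ p, u₂ p = A * ρ₂ p + h₁ p)
    (rel_θ₂ : ∀ p, θ₂ p = (2 / 3) * ρ₂ p - (1 / 9) * (ρ₁ p) ^ 2)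
    (eqa : ∀ p, pdt ρ₂ p - A * pdx ρ₃ p + pdx u₃ p
      + pdx (fun q => ρ₁ q * u₂ q) p + pdx (fun q => ρ₂ q * u₁ q) p = 0)
    (eqc : ∀ p, pdt θ₂ p - A * pdx θ₃ p + (2 / 3) * pdx u₃ p
      + (2 / 3) * θ₁ p * pdx u₂ p + (2 / 3) * θ₂ p * pdx u₁ p
      + u₁ p * pdx θ₂ p + u₂ p * pdx θ₁ p = 0) :
    ∀ p, (2 / 3) * pdx ρ₃ p - pdx θ₃ p - (2 / 9) * pdx (fun q => ρ₁ q * ρ₂ q) p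
      = -(1 / A) * (-((2 / 3) * pdx (fun q => ρ₁ q * h₁ q) p)
          - (1 / 9) * pdt (fun q => (ρ₁ q) ^ 2) p + (4 / 9) * ρ₁ p * pdx h₁ p
          - (2 / 27) * A * (ρ₁ p) ^ 2 * pdx ρ₁ p
          - (1 / 9) * A * ρ₁ p * pdx (fun q => (ρ₁ q) ^ 2) p
          + (2 / 3) * h₁ p * pdx ρ₁ p) :=
  third_order_temperature_combination_general A hA ρ₁ u₁ θ₁ ρ₂ u₂ θ₂ ρ₃ u₃ θ₃ h₁ hρ₁ hρ₂ hh₁ rel_u₁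
    rel_θ₁ rel_u₂ rel_θ₂ eqa eqc
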